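/- Let V be a finite-dimensional real vector space, C an open nondegenerate convex cone, and Γ ≤ GL(V) a group preserving C and a lattice L ⊆ V. Then Γ acts properly discontinuously on C: for every compact K ⊆ C, the set {γ ∈ Γ : γK ∩ K ≠ ∅} is finite. -/

import Mathlib

/-!
Since `C` is open and contains no line, its closure is a salient closed cone, so Hahn–Banach
and compactness of the unit sphere give a functional `ℓ` and `c > 0` with `c ‖z‖ ≤ ℓ z` on `C`.
If `γ` preserves `C` and maps `x ∈ K` into `K`, then for `‖v‖ ≤ δ` (with `closedBall x δ ⊆ C`)
both `γ x + γ v` and `γ x - γ v` lie in `C`, which forces `c ‖γ v‖ ≤ ℓ (γ x) ≤ sup_K |ℓ|`.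
So all such `γ` have uniformly bounded norm; as they also preserve `L`, they send a basis of `V`
taken from `L` into a bounded, hence finite, subset of `L`, and there are finitely many of them.
-/

open Set Metric Filter Topology

section ProperCone

variable {E : Type*} [NormedAddCommGroup E] [NormedSpace ℝ E]

theorem ProperCone.exists_pos_on_of_isCompact (K : ProperCone ℝ E)
    (hK : ((K : PointedCone ℝ E) : ConvexCone ℝ E).Salient) {S : Set E} (hS : IsCompact S)
    (hSK : S ⊆ K) (hS0 : (0 : E) ∉ S) :
    ∃ ℓ : StrongDual ℝ E, (∀ x ∈ K, 0 ≤ ℓ x) ∧ ∀ z ∈ S, 0 < ℓ z := by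
  have hsep (z : S) : ∃ f : StrongDual ℝ E, (∀ x ∈ K, 0 ≤ f x) ∧ 0 < f z := by
    obtain ⟨f, hfK, hfz⟩ := K.hyperplane_separation_point
      (hK z (hSK z.2) (ne_of_mem_of_not_mem z.2 hS0))
    exact ⟨f, hfK, by simpa using hfz⟩
  choose f hfK hfz using hsep
  obtain ⟨t, ht⟩ := hS.elim_finite_subcover (fun z => {x | 0 < f z x})
    (fun z => isOpen_lt continuous_const (f z).continuous)
    (fun z hz => mem_iUnion.2 ⟨⟨z, hz⟩, hfz _⟩)
  refine ⟨∑ z ∈ t, f z, fun x hx => ?_, fun z hz => ?_⟩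
  · rw [sum_apply]
    exact Finset.sum_nonneg fun i _ => hfK i x hx
  · obtain ⟨i, hi, hiz⟩ := mem_iUnion₂.1 (ht hz)
    rw [sum_apply]
    exact Finset.sum_pos' (fun j _ => hfK j z (hSK hz)) ⟨i, hi, hiz⟩

theorem ProperCone.exists_mul_norm_le [FiniteDimensional ℝ E] (K : ProperCone ℝ E)
    (hK : ((K : PointedCone ℝ E) : ConvexCone ℝ E).Salient) :
    ∃ ℓ : StrongDual ℝ E, ∃ c > 0, ∀ z ∈ K, c * ‖z‖ ≤ ℓ z := by
  have hS : IsCompact ((K : Set E) ∩ sphere 0 1) := (isCompact_sphere 0 1).inter_left K.isClosed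
  obtain ⟨ℓ, -, hℓ⟩ := K.exists_pos_on_of_isCompact hK hS inter_subset_left (by simp)
  obtain ⟨c, hc, hcℓ⟩ := hS.exists_forall_le' ℓ.continuous.continuousOn hℓ
  refine ⟨ℓ, c, hc, fun z hzK => ?_⟩
  rcases eq_or_ne z 0 with rfl | hz0
  · simp
  have hz : 0 < ‖z‖ := norm_pos_iff.2 hz0
  have := hcℓ (‖z‖⁻¹ • z) ⟨K.smul_mem hzK (by positivity), by simp [norm_smul, hz.ne']⟩
  rwa [map_smul, smul_eq_mul, ← div_eq_inv_mul, le_div_iff₀ hz] at this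

end ProperCone

section OpenCone

variable {E : Type*} [NormedAddCommGroup E] [NormedSpace ℝ E] {C : Set E}

theorem smul_mem_closure_of_cone (hCcone : ∀ x ∈ C, ∀ t : ℝ, 0 < t → t • x ∈ C) {z : E}
    (hz : z ∈ closure C) {t : ℝ} (ht : 0 < t) : t • z ∈ closure C :=
  map_mem_closure (continuous_const_smul t) hz fun x hx => hCcone x hx t ht

theorem zero_mem_closure_of_cone (hCne : C.Nonempty)
    (hCcone : ∀ x ∈ C, ∀ t : ℝ, 0 < t → t • x ∈ C) : (0 : E) ∈ closure C := by
  obtain ⟨x, hx⟩ := hCne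
  have h : Tendsto (fun t : ℝ => t • x) (𝓝[>] 0) (𝓝 0) :=
    ((continuous_id.smul (continuous_const (y := x))).tendsto' 0 0 (zero_smul ℝ x)).mono_left
      nhdsWithin_le_nhds
  exact mem_closure_of_tendsto h (eventually_mem_nhdsWithin.mono fun t ht => hCcone x hx t ht)

theorem add_mem_of_mem_closure_of_cone (hCopen : IsOpen C) (hCconv : Convex ℝ C)
    (hCcone : ∀ x ∈ C, ∀ t : ℝ, 0 < t → t • x ∈ C) {a z : E} (ha : a ∈ C)
    (hz : z ∈ closure C) : a + z ∈ C := by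
  have hmid := hCconv.combo_interior_closure_mem_interior (hCopen.interior_eq.symm ▸ ha) hz
    (by norm_num : (0 : ℝ) < 1 / 2) (by norm_num : (0 : ℝ) ≤ 1 / 2) (by norm_num)
  rw [hCopen.interior_eq] at hmid
  simpa [smul_add, smul_smul] using hCcone _ hmid 2 two_pos

theorem exists_properCone_coe_eq_closure (hCopen : IsOpen C) (hCconv : Convex ℝ C)
    (hCne : C.Nonempty) (hCcone : ∀ x ∈ C, ∀ t : ℝ, 0 < t → t • x ∈ C) :
    ∃ K : ProperCone ℝ E, (K : Set E) = closure C := by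
  refine ⟨{ carrier := closure C
            add_mem' := fun ha hb => map_mem_closure₂ continuous_add ha hb fun a ha b hb =>
              add_mem_of_mem_closure_of_cone hCopen hCconv hCcone ha (subset_closure hb)
            zero_mem' := zero_mem_closure_of_cone hCne hCcone
            smul_mem' := fun c z hz => ?_
            isClosed' := isClosed_closure }, rfl⟩
  rcases c.2.eq_or_lt with hc | hc
  · rw [show c = 0 from Subtype.ext hc.symm, zero_smul]
    exact zero_mem_closure_of_cone hCne hCcone
  · exact smul_mem_closure_of_cone hCcone hz hc

theorem eq_zero_of_mem_closure_of_neg_mem_closure (hCopen : IsOpen C) (hCconv : Convex ℝ C)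
    (hCne : C.Nonempty) (hCcone : ∀ x ∈ C, ∀ t : ℝ, 0 < t → t • x ∈ C)
    (hCnd : ∀ x v : E, v ≠ 0 → ¬ ∀ t : ℝ, x + t • v ∈ C) {z : E} (hz : z ∈ closure C)
    (hnz : -z ∈ closure C) : z = 0 := by
  by_contra hz0
  obtain ⟨x, hx⟩ := hCne
  refine hCnd x z hz0 fun t => ?_
  rcases lt_trichotomy t 0 with ht | rfl | ht
  · have := smul_mem_closure_of_cone hCcone hnz (neg_pos.2 ht)
    rw [neg_smul_neg] at this
    exact add_mem_of_mem_closure_of_cone hCopen hCconv hCcone hx this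
  · simpa using hx
  · exact add_mem_of_mem_closure_of_cone hCopen hCconv hCcone hx
      (smul_mem_closure_of_cone hCcone hz ht)

theorem exists_mul_norm_le_of_isOpen_cone [FiniteDimensional ℝ E] (hCopen : IsOpen C)
    (hCconv : Convex ℝ C) (hCne : C.Nonempty) (hCcone : ∀ x ∈ C, ∀ t : ℝ, 0 < t → t • x ∈ C)
    (hCnd : ∀ x v : E, v ≠ 0 → ¬ ∀ t : ℝ, x + t • v ∈ C) :
    ∃ ℓ : StrongDual ℝ E, ∃ c > 0, ∀ z ∈ C, c * ‖z‖ ≤ ℓ z := by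
  obtain ⟨K, hK⟩ := exists_properCone_coe_eq_closure hCopen hCconv hCne hCcone
  have hKsalient : ((K : PointedCone ℝ E) : ConvexCone ℝ E).Salient := fun z hz hz0 hnz =>
    hz0 <| eq_zero_of_mem_closure_of_neg_mem_closure hCopen hCconv hCne hCcone hCnd
      (hK ▸ hz) (hK ▸ hnz)
  obtain ⟨ℓ, c, hc, hℓ⟩ := K.exists_mul_norm_le hKsalient
  exact ⟨ℓ, c, hc, fun z hz => hℓ z (by rw [← SetLike.mem_coe, hK]; exact subset_closure hz)⟩

end OpenCone

section LinearBounds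

variable {E F : Type*} [NormedAddCommGroup E] [NormedSpace ℝ E]
  [NormedAddCommGroup F] [NormedSpace ℝ F]

theorem mul_norm_le_of_add_mem_of_sub_mem {S : Set E} {ℓ : StrongDual ℝ E} {c : ℝ} (hc : 0 ≤ c)
    (hℓ : ∀ z ∈ S, c * ‖z‖ ≤ ℓ z) {y w : E} (hadd : y + w ∈ S) (hsub : y - w ∈ S) :
    c * ‖w‖ ≤ ℓ y := by
  have htri : 2 * ‖w‖ ≤ ‖y + w‖ + ‖y - w‖ :=
    calc 2 * ‖w‖ = ‖(y + w) - (y - w)‖ := by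
          rw [show (y + w) - (y - w) = (2 : ℝ) • w by module, norm_smul, Real.norm_two]
      _ ≤ ‖y + w‖ + ‖y - w‖ := norm_sub_le _ _
  have hadd' := hℓ _ hadd
  have hsub' := hℓ _ hsub
  rw [map_add] at hadd'
  rw [map_sub] at hsub'
  linarith [mul_le_mul_of_nonneg_left htri hc]

theorem LinearMap.norm_apply_le_of_norm_le (f : E →ₗ[ℝ] F) {r R : ℝ} (hr : 0 < r)
    (h : ∀ v, ‖v‖ ≤ r → ‖f v‖ ≤ R) (v : E) : ‖f v‖ ≤ R / r * ‖v‖ := by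
  rcases eq_or_ne v 0 with rfl | hv0
  · simp
  have hv : 0 < ‖v‖ := norm_pos_iff.2 hv0
  have := h ((r / ‖v‖) • v) (by rw [norm_smul, Real.norm_of_nonneg (by positivity),
    div_mul_cancel₀ _ hv.ne'])
  rw [map_smul, norm_smul, Real.norm_of_nonneg (by positivity), div_mul_eq_mul_div,
    div_le_iff₀ hv] at this
  rw [div_mul_eq_mul_div, le_div_iff₀ hr]
  linarith

theorem LinearMap.norm_apply_le_of_mapsTo {C : Set E} {C' : Set F} (f : E →ₗ[ℝ] F)
    (hf : MapsTo f C C') {ℓ : StrongDual ℝ F} {c : ℝ} (hc : 0 < c)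
    (hℓ : ∀ z ∈ C', c * ‖z‖ ≤ ℓ z) {x : E} {δ : ℝ} (hδ : 0 < δ) (hx : closedBall x δ ⊆ C)
    (v : E) : ‖f v‖ ≤ ℓ (f x) / c / δ * ‖v‖ := by
  refine f.norm_apply_le_of_norm_le hδ (fun w hw => ?_) v
  have hmem (u : E) (hu : ‖u‖ ≤ δ) : x + u ∈ C := hx (by simpa [dist_eq_norm] using hu)
  rw [le_div_iff₀' hc]
  refine mul_norm_le_of_add_mem_of_sub_mem hc.le hℓ ?_ ?_
  · rw [← map_add]
    exact hf (hmem w hw)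
  · rw [← map_sub, sub_eq_add_neg]
    exact hf (hmem (-w) (by rwa [norm_neg]))

theorem finite_setOf_mapsTo_addSubgroup_of_norm_le [FiniteDimensional ℝ E] [ProperSpace F]
    {s : Set E} (hs : Submodule.span ℝ s = ⊤) (L : AddSubgroup F) [DiscreteTopology L] (R : ℝ) :
    {f : E →ₗ[ℝ] F | MapsTo f s L ∧ ∀ v, ‖f v‖ ≤ R * ‖v‖}.Finite := by
  obtain ⟨t, hts, htspan, hli⟩ := exists_linearIndependent ℝ s
  have : Finite t := hli.setFinite
  have hfin (v : E) : ((L : Set F) ∩ closedBall 0 (R * ‖v‖)).Finite := by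
    rw [inter_comm]
    exact finite_isBounded_inter_isClosed DiscreteTopology.isDiscrete isBounded_closedBall
      AddSubgroup.isClosed_of_discrete
  have hinj : Function.Injective fun (f : E →ₗ[ℝ] F) (i : t) => f i := fun f g hfg =>
    LinearMap.ext_on (htspan.trans hs) fun i hi => congrFun hfg ⟨i, hi⟩
  refine ((Finite.pi (t := fun i : t => (L : Set F) ∩ closedBall 0 (R * ‖(i : E)‖))
    fun i => hfin i).preimage hinj.injOn).subset ?_
  rintro f ⟨hfL, hfR⟩ i -
  exact ⟨hfL (hts i.2), by simpa using hfR i⟩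

end LinearBounds

/-- A subgroup `Γ` of `GL(V)` preserving an open nondegenerate
convex cone `C` and a lattice `L` acts properly discontinuously on `C`: for
every compact `K ⊆ C`, only finitely many `γ ∈ Γ` satisfy `γK ∩ K ≠ ∅`. -/
theorem stmt_10 {V : Type*} [NormedAddCommGroup V] [NormedSpace ℝ V]
    [FiniteDimensional ℝ V]
    (L : AddSubgroup V) (hLdisc : DiscreteTopology L)
    (hLspan : Submodule.span ℝ (L : Set V) = ⊤)
    (C : Set V) (hCopen : IsOpen C) (hCconv : Convex ℝ C) (hCne : C.Nonempty)
    (hCcone : ∀ x ∈ C, ∀ t : ℝ, 0 < t → t • x ∈ C)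
    (hCnd : ∀ x v : V, v ≠ 0 → ¬ ∀ t : ℝ, x + t • v ∈ C)
    (Γ : Subgroup (LinearMap.GeneralLinearGroup ℝ V))
    (hΓC : ∀ γ ∈ Γ, (γ : V →ₗ[ℝ] V) '' C = C)
    (hΓL : ∀ γ ∈ Γ, (γ : V →ₗ[ℝ] V) '' (L : Set V) = (L : Set V)) :
    ∀ K : Set V, IsCompact K → K ⊆ C →
      {γ : Γ | (((γ : LinearMap.GeneralLinearGroup ℝ V) : V →ₗ[ℝ] V) '' K ∩ K).Nonempty}.Finite := by
  intro K hK hKC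
  obtain ⟨ℓ, c, hc, hℓ⟩ := exists_mul_norm_le_of_isOpen_cone hCopen hCconv hCne hCcone hCnd
  obtain ⟨δ, hδ, hδK⟩ := hK.exists_cthickening_subset_open hCopen hKC
  obtain ⟨M, hM⟩ := hK.exists_bound_of_continuousOn ℓ.continuous.continuousOn
  have hinj : Function.Injective
      fun γ : Γ => ((γ : LinearMap.GeneralLinearGroup ℝ V) : V →ₗ[ℝ] V) :=
    Units.val_injective.comp Subtype.val_injective
  refine ((finite_setOf_mapsTo_addSubgroup_of_norm_le hLspan L (M / c / δ)).preimage
    hinj.injOn).subset ?_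
  rintro γ ⟨_, ⟨x, hxK, rfl⟩, hγx⟩
  refine ⟨mapsTo_iff_image_subset.2 (hΓL γ γ.2).subset, fun v => ?_⟩
  refine (LinearMap.norm_apply_le_of_mapsTo _ (mapsTo_iff_image_subset.2 (hΓC γ γ.2).subset) hc
    hℓ hδ ((closedBall_subset_cthickening hxK δ).trans hδK) v).trans ?_
  gcongr
  exact (le_abs_self _).trans (hM _ hγx)
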